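/- arXiv:math/0702402 — 4 statements merged into one kernel-verified Lean document; each statement's English description precedes it below -/
import Mathlib

section
/- Let (F(n))_{n∈ℕ^d} be a filtration indexed by ℕ^d (componentwise order) on a probability space, and let (σ_0(t))_{t≥0} be a family of ℕ^d-valued F-stopping times such that for every ω the map t ↦ σ_0(t)(ω) is nondecreasing and right-continuous. Set F_1(t) := F(σ_0(t)). Let τ̌ : Ω → [0,∞) be an (F_1(t))_{t≥0}-stopping time, i.e., {τ̌ ≤ t} ∈ F_1(t) for every t ≥ 0, and define ρ : Ω → ℕ^d by ρ(ω) := σ_0(τ̌(ω))(ω). Then ρ is an F-stopping time, and the stopped σ-algebras coincide: F(ρ) = F_1(τ̌), where F_1(τ̌) := {A : A ∩ {τ̌ ≤ t} ∈ F_1(t) for all t ≥ 0}. -/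
open MeasureTheory ProbabilityTheory Set

noncomputable section

namespace Stmt4

/-- Lemma 4.1: in the setting of Statement 3 (a nondecreasing,
right-continuous family `(σ₀(t))_{t ≥ 0}` of `ℕ^d`-valued stopping times for a multiparameter
filtration `F`, with `F₁(t) := F(σ₀(t))`), if `τ̌` is an `(F₁(t))`-stopping time (i.e.
`{τ̌ ≤ t} ∈ F₁(t)` for all `t ≥ 0`) and `ρ(ω) := σ₀(τ̌(ω))(ω)`, then `ρ` is an `F`-stopping
time and the stopped σ-algebras coincide: `F(ρ) = F₁(τ̌)`. -/
theorem stmt4 {Ω : Type*} [inst : MeasurableSpace Ω] (P : Measure Ω) [IsProbabilityMeasure P]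
    {d : ℕ} (F : (Fin d → ℕ) → MeasurableSpace Ω)
    (hF_le : ∀ n, F n ≤ inst)
    (hF_mono : ∀ ⦃m n : Fin d → ℕ⦄, m ≤ n → F m ≤ F n)
    (σ0 : ℝ → Ω → Fin d → ℕ)
    (hstop : ∀ t : ℝ, 0 ≤ t → ∀ n, MeasurableSet[F n] {ω | σ0 t ω ≤ n})
    (hmono : ∀ ω, ∀ ⦃s t : ℝ⦄, 0 ≤ s → s ≤ t → σ0 s ω ≤ σ0 t ω)
    (hrc : ∀ ω, ∀ t : ℝ, 0 ≤ t → ∃ ε > (0 : ℝ), ∀ s, t ≤ s → s < t + ε → σ0 s ω = σ0 t ω)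
    (τcheck : Ω → ℝ)
    (hτ_nonneg : ∀ ω, 0 ≤ τcheck ω)
    (hτ_stop : ∀ t : ℝ, 0 ≤ t →
      ∀ n, MeasurableSet[F n] ({ω | τcheck ω ≤ t} ∩ {ω | σ0 t ω ≤ n})) :
    (∀ n, MeasurableSet[F n] {ω | σ0 (τcheck ω) ω ≤ n}) ∧
    (∀ A : Set Ω, MeasurableSet A →
      ((∀ n, MeasurableSet[F n] (A ∩ {ω | σ0 (τcheck ω) ω ≤ n})) ↔
        ∀ t : ℝ, 0 ≤ t →
          ∀ n, MeasurableSet[F n] ((A ∩ {ω | τcheck ω ≤ t}) ∩ {ω | σ0 t ω ≤ n}))) := by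
  -- Key set identity: {ρ ≤ n} is a countable union over rationals.
  have key : ∀ n, {ω | σ0 (τcheck ω) ω ≤ n} =
      ⋃ (q : ℚ), ⋃ (_ : (0:ℝ) ≤ (q:ℝ)),
        ({ω | τcheck ω ≤ (q:ℝ)} ∩ {ω | σ0 (q:ℝ) ω ≤ n}) := by
    intro n
    ext ω
    simp only [mem_iUnion, mem_inter_iff, mem_setOf_eq]
    constructor
    · intro h
      obtain ⟨ε, hε, hconst⟩ := hrc ω (τcheck ω) (hτ_nonneg ω)
      obtain ⟨q, hq1, hq2⟩ := exists_rat_btwn (lt_add_of_pos_right (τcheck ω) hε)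
      refine ⟨q, (hτ_nonneg ω).trans hq1.le, hq1.le, ?_⟩
      rw [hconst _ hq1.le hq2]; exact h
    · rintro ⟨q, hq0, hτq, hσq⟩
      exact le_trans (hmono ω (hτ_nonneg ω) hτq) hσq
  have hρ : ∀ n, MeasurableSet[F n] {ω | σ0 (τcheck ω) ω ≤ n} := by
    intro n
    rw [key n]
    exact MeasurableSet.iUnion fun q => MeasurableSet.iUnion fun hq => hτ_stop _ hq n
  refine ⟨hρ, fun A _ => ⟨fun hA t ht n => ?_, fun hA n => ?_⟩⟩
  · -- (A ∩ {τ̌ ≤ t}) ∩ {σ0 t ≤ n} = (A ∩ {ρ ≤ n}) ∩ ({τ̌ ≤ t} ∩ {σ0 t ≤ n})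
    have heq : (A ∩ {ω | τcheck ω ≤ t}) ∩ {ω | σ0 t ω ≤ n} =
        (A ∩ {ω | σ0 (τcheck ω) ω ≤ n}) ∩ ({ω | τcheck ω ≤ t} ∩ {ω | σ0 t ω ≤ n}) := by
      ext ω
      simp only [mem_inter_iff, mem_setOf_eq]
      constructor
      · rintro ⟨⟨hAω, hτ⟩, hσ⟩
        exact ⟨⟨hAω, le_trans (hmono ω (hτ_nonneg ω) hτ) hσ⟩, hτ, hσ⟩
      · rintro ⟨⟨hAω, _⟩, hτ, hσ⟩
        exact ⟨⟨hAω, hτ⟩, hσ⟩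
    rw [heq]
    exact (hA n).inter (hτ_stop t ht n)
  · have heq : A ∩ {ω | σ0 (τcheck ω) ω ≤ n} =
        ⋃ (q : ℚ), ⋃ (_ : (0:ℝ) ≤ (q:ℝ)),
          ((A ∩ {ω | τcheck ω ≤ (q:ℝ)}) ∩ {ω | σ0 (q:ℝ) ω ≤ n}) := by
      rw [key n]
      ext ω
      simp only [mem_inter_iff, mem_iUnion, mem_setOf_eq]
      tauto
    rw [heq]
    exact MeasurableSet.iUnion fun q => MeasurableSet.iUnion fun hq => hA _ hq n

end Stmt4
end
end

section
/- Let (F(n))_{n∈ℕ^d} be a filtration indexed by ℕ^d (componentwise order) on a probability space, and let (M(n))_{n∈ℕ^d} be a real-valued F-martingale such that for some constant c < ∞, for every n ∈ ℕ^d and every standard basis vector e_l (l = 1,…,d), E[|M(n + e_l) − M(n)| | F(n)] ≤ c a.s. Let (ρ(t))_{t≥0} be a family of ℕ^d-valued F-stopping times that is pointwise nondecreasing in t (ρ(s)(ω) ≤ ρ(t)(ω) componentwise for s ≤ t) and satisfies E[∑_{l=1}^d ρ_l(t)] < ∞ for every t ≥ 0. Then the process N(t) := M(ρ(t)) is a martingale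 with respect to the filtration G(t) := F(ρ(t)): each N(t) is integrable, G(t)-measurable, and E[N(t) | G(s)] = N(s) a.s. for all 0 ≤ s ≤ t. -/
/-
Optional sampling for bounded stopping times is a finite sum of martingale identities. An
`ℕ^d`-valued stopping time `γ` is approximated by the bounded stopping times `truncate γ k`, and
everything hinges on a bound uniform in `k`. As `truncate γ k ≤ truncate (diagHull γ) k`, which
is a diagonal point `(j,…,j)` with `j ≤ max_l γ_l`, conditional Jensen gives
`E|M(truncate γ k)| ≤ E|M(j,…,j)|`, while
`|M(j,…,j)| ≤ |M(0)| + Σ_{i < max γ} |M(i+1,…,i+1) - M(i,…,i)|`. A diagonal step is `d` unit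
steps taken on the `F(i,…,i)`-event `{max γ > i}`, so the expected variation is at most
`d c Σ_i P(max γ > i) ≤ d c E[Σ_l γ_l]`. Fatou then makes `M(γ)` integrable, dominated
convergence gives `M(truncate γ k) → M(γ)` in `L¹`, and for `A ∈ F(σ)` the events
`A ∩ {σ ≤ (k,…,k)}` lie in `F(truncate σ k) ⊆ F(truncate τ k)`, on which both truncated values
integrate like `M(k,…,k)`.
-/

open MeasureTheory ProbabilityTheory Set
open scoped NNReal

noncomputable section

namespace Stmt6

variable {Ω : Type*} {d : ℕ}

def stoppedSigma (F : (Fin d → ℕ) → MeasurableSpace Ω) (γ : Ω → Fin d → ℕ)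
    (hγ : ∀ n, MeasurableSet[F n] {ω | γ ω ≤ n}) : MeasurableSpace Ω where
  MeasurableSet' A := ∀ n, MeasurableSet[F n] (A ∩ {ω | γ ω ≤ n})
  measurableSet_empty := fun n => by
    simp
  measurableSet_compl := fun A hA n => by
    have h : Aᶜ ∩ {ω | γ ω ≤ n} = {ω | γ ω ≤ n} \ (A ∩ {ω | γ ω ≤ n}) := by
      ext ω; by_cases h : γ ω ≤ n <;> simp [h]
    rw [h]
    exact (hγ n).diff (hA n)
  measurableSet_iUnion := fun A hA n => by
    rw [Set.iUnion_inter]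
    exact MeasurableSet.iUnion fun i => hA i n

open Filter Topology

section Integration

variable {mΩ : MeasurableSpace Ω} {P : Measure Ω}

theorem integrable_of_tendsto_of_integral_abs_le {f : ℕ → Ω → ℝ} {g : Ω → ℝ} {C : ℝ}
    (hf : ∀ k, Integrable (f k) P) (hC : ∀ k, ∫ ω, |f k ω| ∂P ≤ C)
    (hfg : ∀ᵐ ω ∂P, Tendsto (fun k => f k ω) atTop (𝓝 (g ω))) : Integrable g P := by
  refine memLp_one_iff_integrable.1
    ⟨aestronglyMeasurable_of_tendsto_ae atTop (fun k => (hf k).1) hfg, ?_⟩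
  refine (Lp.eLpNorm_le_of_ae_tendsto (C := ENNReal.ofReal C) (Eventually.of_forall fun k => ?_)
    (fun k => (hf k).1) hfg).trans_lt ENNReal.ofReal_lt_top
  rw [eLpNorm_one_eq_lintegral_enorm, ← ofReal_integral_norm_eq_lintegral_enorm (hf k)]
  simpa only [Real.norm_eq_abs] using ENNReal.ofReal_le_ofReal (hC k)

theorem setIntegral_le_of_condExp_le [IsFiniteMeasure P] {m : MeasurableSpace Ω} (hm : m ≤ mΩ)
    {f : Ω → ℝ} (hf : Integrable f P) {c : ℝ} (hc : ∀ᵐ ω ∂P, P[f | m] ω ≤ c) {B : Set Ω}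
    (hB : MeasurableSet[m] B) : ∫ ω in B, f ω ∂P ≤ c * P.real B := by
  calc ∫ ω in B, f ω ∂P = ∫ ω in B, P[f | m] ω ∂P := (setIntegral_condExp hm hf hB).symm
    _ ≤ ∫ _ in B, c ∂P := setIntegral_mono_ae integrable_condExp.integrableOn
        (integrableOn_const (measure_ne_top _ _)) hc
    _ = c * P.real B := by rw [setIntegral_const, smul_eq_mul, mul_comm]

end Integration

def IsMultiStoppingTime (F : (Fin d → ℕ) → MeasurableSpace Ω) (γ : Ω → Fin d → ℕ) : Prop :=
  ∀ n, MeasurableSet[F n] {ω | γ ω ≤ n}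

variable {mΩ : MeasurableSpace Ω} {ℱ : Filtration (Fin d → ℕ) mΩ} {γ σ τ : Ω → Fin d → ℕ}

namespace IsMultiStoppingTime

theorem measurableSet_eq (hγ : IsMultiStoppingTime ℱ γ) (n : Fin d → ℕ) :
    MeasurableSet[ℱ n] {ω | γ ω = n} := by
  have h : IsStoppingTime ℱ fun ω => (γ ω : WithTop (Fin d → ℕ)) := fun n => by
    simpa only [WithTop.coe_le_coe] using hγ n
  simpa only [WithTop.coe_inj] using h.measurableSet_eq_of_countable n

theorem stoppedSigma_le (hγ : IsMultiStoppingTime ℱ γ) : stoppedSigma ℱ γ hγ ≤ mΩ := by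
  intro A hA
  have h : A = ⋃ n, A ∩ {ω | γ ω ≤ n} := by
    ext ω
    simp only [mem_iUnion, mem_inter_iff, mem_ofPred_eq]
    exact ⟨fun h => ⟨γ ω, h, le_rfl⟩, fun ⟨_, h, _⟩ => h⟩
  rw [h]
  exact MeasurableSet.iUnion fun n => ℱ.le n _ (hA n)

end IsMultiStoppingTime

theorem stoppedSigma_mono (hσ : IsMultiStoppingTime ℱ σ) (hτ : IsMultiStoppingTime ℱ τ)
    (hστ : ∀ ω, σ ω ≤ τ ω) : stoppedSigma ℱ σ hσ ≤ stoppedSigma ℱ τ hτ := by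
  intro A hA n
  have h : A ∩ {ω | τ ω ≤ n} = A ∩ {ω | σ ω ≤ n} ∩ {ω | τ ω ≤ n} := by
    ext ω
    simp only [mem_inter_iff, mem_ofPred_eq]
    exact ⟨fun ⟨hA, h⟩ => ⟨⟨hA, (hστ ω).trans h⟩, h⟩, fun ⟨⟨hA, _⟩, h⟩ => ⟨hA, h⟩⟩
  rw [h]
  exact (hA n).inter (hτ n)

theorem measurable_stoppedValue {M : (Fin d → ℕ) → Ω → ℝ} (hM : Adapted ℱ M)
    (hγ : IsMultiStoppingTime ℱ γ) :
    Measurable[stoppedSigma ℱ γ hγ] fun ω => M (γ ω) ω := by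
  intro s hs n
  have h : (fun ω => M (γ ω) ω) ⁻¹' s ∩ {ω | γ ω ≤ n} =
      ⋃ (m : Fin d → ℕ) (_ : m ≤ n), {ω | γ ω = m} ∩ M m ⁻¹' s := by
    ext ω
    simp only [mem_inter_iff, mem_preimage, mem_ofPred_eq, mem_iUnion]
    exact ⟨fun ⟨hs, hn⟩ => ⟨γ ω, hn, rfl, hs⟩, fun ⟨m, hmn, hm, hs⟩ => hm ▸ ⟨hs, hmn⟩⟩
  rw [h]
  exact MeasurableSet.iUnion fun m => MeasurableSet.iUnion fun hmn =>
    ℱ.mono hmn _ ((hγ.measurableSet_eq m).inter (hM m hs))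

section Bounded

variable {P : Measure Ω} {M : (Fin d → ℕ) → Ω → ℝ} {N : Fin d → ℕ}

theorem stoppedValue_eq_sum_indicator {E : Type*} [AddCommMonoid E] (hγN : ∀ ω, γ ω ≤ N)
    (g : (Fin d → ℕ) → Ω → E) (ω : Ω) :
    g (γ ω) ω = ∑ n ∈ Finset.Iic N, {ω' | γ ω' = n}.indicator (g n) ω := by
  rw [Finset.sum_eq_single_of_mem (γ ω) (Finset.mem_Iic.2 (hγN ω))]
  · simp
  · intro n _ hn
    simp [Ne.symm hn]

theorem integrable_stoppedValue_of_le (hM : Martingale M ℱ P) (hγ : IsMultiStoppingTime ℱ γ)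
    (hγN : ∀ ω, γ ω ≤ N) : Integrable (fun ω => M (γ ω) ω) P := by
  simp_rw [stoppedValue_eq_sum_indicator hγN M]
  exact integrable_finsetSum _ fun n _ =>
    (hM.integrable n).indicator (ℱ.le n _ (hγ.measurableSet_eq n))

theorem setIntegral_stoppedValue_eq_sum (hγ : IsMultiStoppingTime ℱ γ) (hγN : ∀ ω, γ ω ≤ N)
    {g : (Fin d → ℕ) → Ω → ℝ} (hg : ∀ n, Integrable (g n) P) {A : Set Ω} :
    ∫ ω in A, g (γ ω) ω ∂P = ∑ n ∈ Finset.Iic N, ∫ ω in A ∩ {ω | γ ω = n}, g n ω ∂P := by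
  have hmeas n := ℱ.le n _ (hγ.measurableSet_eq n)
  simp_rw [stoppedValue_eq_sum_indicator hγN g]
  rw [integral_finsetSum _ fun n _ => ((hg n).indicator (hmeas n)).integrableOn]
  exact Finset.sum_congr rfl fun n _ => setIntegral_indicator (hmeas n)

theorem setIntegral_stoppedValue_of_le [IsFiniteMeasure P] (hM : Martingale M ℱ P)
    (hγ : IsMultiStoppingTime ℱ γ) (hγN : ∀ ω, γ ω ≤ N) {A : Set Ω}
    (hA : MeasurableSet[stoppedSigma ℱ γ hγ] A) :
    ∫ ω in A, M (γ ω) ω ∂P = ∫ ω in A, M N ω ∂P := by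
  rw [setIntegral_stoppedValue_eq_sum hγ hγN hM.integrable,
    setIntegral_stoppedValue_eq_sum (g := fun _ => M N) hγ hγN fun _ => hM.integrable N]
  refine Finset.sum_congr rfl fun n hn => hM.setIntegral_eq (Finset.mem_Iic.1 hn) ?_
  have h : A ∩ {ω | γ ω = n} = A ∩ {ω | γ ω ≤ n} ∩ {ω | γ ω = n} := by
    ext ω
    simp only [mem_inter_iff, mem_ofPred_eq]
    exact ⟨fun ⟨hA, h⟩ => ⟨⟨hA, h.le⟩, h⟩, fun ⟨⟨hA, _⟩, h⟩ => ⟨hA, h⟩⟩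
  rw [h]
  exact (hA n).inter (hγ.measurableSet_eq n)

theorem integral_abs_stoppedValue_le_of_le [IsFiniteMeasure P] (hM : Martingale M ℱ P)
    (hσ : IsMultiStoppingTime ℱ σ) (hτ : IsMultiStoppingTime ℱ τ) (hστ : ∀ ω, σ ω ≤ τ ω)
    (hτN : ∀ ω, τ ω ≤ N) :
    ∫ ω, |M (σ ω) ω| ∂P ≤ ∫ ω, |M (τ ω) ω| ∂P := by
  have hσN ω : σ ω ≤ N := (hστ ω).trans (hτN ω)
  have h : (fun ω => M (σ ω) ω) =ᵐ[P] P[fun ω => M (τ ω) ω | stoppedSigma ℱ σ hσ] :=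
    ae_eq_condExp_of_forall_setIntegral_eq hσ.stoppedSigma_le
      (integrable_stoppedValue_of_le hM hτ hτN)
      (fun _ _ _ => (integrable_stoppedValue_of_le hM hσ hσN).integrableOn)
      (fun A hA _ => by
        rw [setIntegral_stoppedValue_of_le hM hσ hσN hA, setIntegral_stoppedValue_of_le hM hτ hτN
          (stoppedSigma_mono hσ hτ hστ _ hA)])
      (measurable_stoppedValue hM.stronglyAdapted.adapted hσ).aestronglyMeasurable
  calc ∫ ω, |M (σ ω) ω| ∂P
      = ∫ ω, |P[fun ω => M (τ ω) ω | stoppedSigma ℱ σ hσ] ω| ∂P :=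
        integral_congr_ae (h.fun_comp abs)
    _ ≤ ∫ ω, |M (τ ω) ω| ∂P := integral_abs_condExp_le _

end Bounded

section Diagonal

def maxCoord (γ : Ω → Fin d → ℕ) (ω : Ω) : ℕ := Finset.univ.sup (γ ω)

def diagHull (γ : Ω → Fin d → ℕ) (ω : Ω) : Fin d → ℕ := fun _ => maxCoord γ ω

variable {k : ℕ} {ω : Ω}

theorem maxCoord_le_iff : maxCoord γ ω ≤ k ↔ γ ω ≤ fun _ => k := by
  simp [maxCoord, Pi.le_def]

theorem le_diagHull : γ ω ≤ diagHull γ ω := fun _ => maxCoord_le_iff.1 le_rfl _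

theorem maxCoord_le_sum : (maxCoord γ ω : ℝ) ≤ ∑ l, (γ ω l : ℝ) := by
  exact_mod_cast Finset.sup_le fun l _ => Finset.single_le_sum (fun _ _ => Nat.zero_le _)
    (Finset.mem_univ l)

theorem IsMultiStoppingTime.diagHull (hγ : IsMultiStoppingTime ℱ γ) :
    IsMultiStoppingTime ℱ (diagHull γ) := by
  intro n
  rcases isEmpty_or_nonempty (Fin d) with hd | hd
  · simp
  · obtain ⟨l₀, hl₀⟩ := Finite.exists_min n
    have h : {ω | Stmt6.diagHull γ ω ≤ n} = {ω | γ ω ≤ fun _ => n l₀} := by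
      ext ω
      change (∀ l, maxCoord γ ω ≤ n l) ↔ γ ω ≤ fun _ => n l₀
      rw [← maxCoord_le_iff]
      exact ⟨fun h => h l₀, fun h l => h.trans (hl₀ l)⟩
    rw [h]
    exact ℱ.mono hl₀ _ (hγ _)

theorem IsMultiStoppingTime.measurableSet_lt_maxCoord (hγ : IsMultiStoppingTime ℱ γ) (k : ℕ) :
    MeasurableSet[ℱ fun _ => k] {ω | k < maxCoord γ ω} := by
  have h : {ω | k < maxCoord γ ω} = {ω | γ ω ≤ fun _ => k}ᶜ := by
    ext ω
    simp [← maxCoord_le_iff]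
  rw [h]
  exact (hγ _).compl

end Diagonal

section Truncation

-- The componentwise minimum with `(k,…,k)` is in general not a stopping time for an
-- `ℕ^d`-indexed filtration; this all-or-nothing truncation is.
open scoped Classical in
def truncate (γ : Ω → Fin d → ℕ) (k : ℕ) (ω : Ω) : Fin d → ℕ :=
  if γ ω ≤ (fun _ => k) then γ ω else fun _ => k

variable {k : ℕ} {ω : Ω}

theorem truncate_of_le (h : γ ω ≤ fun _ => k) : truncate γ k ω = γ ω := if_pos h

theorem truncate_of_not_le (h : ¬γ ω ≤ fun _ => k) : truncate γ k ω = fun _ => k := if_neg h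

theorem truncate_le : truncate γ k ω ≤ fun _ => k := by
  by_cases h : γ ω ≤ fun _ => k
  · rwa [truncate_of_le h]
  · rw [truncate_of_not_le h]

theorem truncate_mono (h : σ ω ≤ τ ω) : truncate σ k ω ≤ truncate τ k ω := by
  by_cases hτ : τ ω ≤ fun _ => k
  · rwa [truncate_of_le hτ, truncate_of_le (h.trans hτ)]
  · exact truncate_of_not_le hτ ▸ truncate_le

theorem eventually_truncate_eq (γ : Ω → Fin d → ℕ) (ω : Ω) :
    ∀ᶠ k in atTop, truncate γ k ω = γ ω := by
  filter_upwards [eventually_ge_atTop (maxCoord γ ω)] with k hk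
  exact truncate_of_le (maxCoord_le_iff.1 hk)

theorem IsMultiStoppingTime.truncate (hγ : IsMultiStoppingTime ℱ γ) (k : ℕ) :
    IsMultiStoppingTime ℱ (truncate γ k) := by
  intro n
  by_cases hk : (fun _ => k) ≤ n
  · simp only [truncate_le.trans hk, ofPred_true, MeasurableSet.univ]
  · have h : {ω | Stmt6.truncate γ k ω ≤ n} = {ω | γ ω ≤ (fun _ => k) ⊓ n} := by
      ext ω
      by_cases h : γ ω ≤ fun _ => k
      · simp [truncate_of_le h, h]
      · simp [truncate_of_not_le h, h, hk]
    rw [h]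
    exact ℱ.mono inf_le_right _ (hγ _)

theorem measurableSet_inter_le_truncate (hσ : IsMultiStoppingTime ℱ σ) {A : Set Ω}
    (hA : MeasurableSet[stoppedSigma ℱ σ hσ] A) (k : ℕ) :
    MeasurableSet[stoppedSigma ℱ (truncate σ k) (hσ.truncate k)]
      (A ∩ {ω | σ ω ≤ fun _ => k}) := by
  intro n
  have h : A ∩ {ω | σ ω ≤ fun _ => k} ∩ {ω | truncate σ k ω ≤ n} =
      A ∩ {ω | σ ω ≤ (fun _ => k) ⊓ n} := by
    ext ω
    by_cases h : σ ω ≤ fun _ => k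
    · simp [truncate_of_le h, h]
    · simp [h]
  rw [h]
  exact ℱ.mono inf_le_right _ (hA _)

theorem truncate_diagHull : truncate (diagHull γ) k ω = fun _ => min (maxCoord γ ω) k := by
  by_cases h : maxCoord γ ω ≤ k
  · rw [truncate_of_le fun _ => h, min_eq_left h]
    rfl
  · obtain ⟨l, -⟩ : ∃ l, k < γ ω l := by
      by_contra! h'
      exact h (maxCoord_le_iff.2 h')
    rw [truncate_of_not_le fun h' => h (h' l), min_eq_right (by omega)]

end Truncation

section Increments

def HasBoundedIncrements (P : Measure Ω) (ℱ : Filtration (Fin d → ℕ) mΩ)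
    (M : (Fin d → ℕ) → Ω → ℝ) (c : ℝ) : Prop :=
  ∀ (n : Fin d → ℕ) (l : Fin d), ∀ᵐ ω ∂P,
    P[fun ω' => |M (Function.update n l (n l + 1)) ω' - M n ω'| | ℱ n] ω ≤ c

variable {P : Measure Ω} [IsFiniteMeasure P] {M : (Fin d → ℕ) → Ω → ℝ} {c : ℝ}

theorem setIntegral_abs_diag_increment_le (hM : Martingale M ℱ P)
    (hc : HasBoundedIncrements P ℱ M c) (k : ℕ) {B : Set Ω} (hB : MeasurableSet[ℱ fun _ => k] B) :
    ∫ ω in B, |M (fun _ => k + 1) ω - M (fun _ => k) ω| ∂P ≤ d * c * P.real B := by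
  -- climb from `(k,…,k)` to `(k+1,…,k+1)` one coordinate at a time
  set q : ℕ → Fin d → ℕ := fun r l => if (l : ℕ) < r then k + 1 else k
  have hq0 : q 0 = fun _ => k := by funext l; simp [q]
  have hqd : q d = fun _ => k + 1 := by funext l; simp [q, l.isLt]
  have hq_succ (r : ℕ) (hr : r < d) :
      q (r + 1) = Function.update (q r) ⟨r, hr⟩ (q r ⟨r, hr⟩ + 1) := by
    funext l
    rcases eq_or_ne l ⟨r, hr⟩ with rfl | hl
    · simp [q]
    · have : (l : ℕ) ≠ r := fun h => hl (Fin.ext h)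
      simp only [q, Function.update_of_ne hl]
      split_ifs <;> omega
  have hq_ge (r : ℕ) : (fun _ => k) ≤ q r := fun l => by
    simp only [q]
    split_ifs <;> omega
  have hint (r : ℕ) : Integrable (fun ω => |M (q (r + 1)) ω - M (q r) ω|) P :=
    ((hM.integrable _).sub (hM.integrable _)).abs
  calc ∫ ω in B, |M (fun _ => k + 1) ω - M (fun _ => k) ω| ∂P
      ≤ ∫ ω in B, ∑ r ∈ Finset.range d, |M (q (r + 1)) ω - M (q r) ω| ∂P := by
        refine setIntegral_mono ((hM.integrable _).sub (hM.integrable _)).abs.integrableOn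
          (integrable_finsetSum _ fun r _ => hint r).integrableOn fun ω => ?_
        have htel := Finset.sum_range_sub (fun r => M (q r) ω) d
        simp only [hq0, hqd] at htel
        rw [← htel]
        exact Finset.abs_sum_le_sum_abs _ _
    _ = ∑ r ∈ Finset.range d, ∫ ω in B, |M (q (r + 1)) ω - M (q r) ω| ∂P :=
        integral_finsetSum _ fun r _ => (hint r).integrableOn
    _ ≤ ∑ _r ∈ Finset.range d, c * P.real B := Finset.sum_le_sum fun r hr => by
        rw [hq_succ r (Finset.mem_range.1 hr)]
        exact setIntegral_le_of_condExp_le (ℱ.le _) ((hM.integrable _).sub (hM.integrable _)).abs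
          (hc _ _) (ℱ.mono (hq_ge r) _ hB)
    _ = d * c * P.real B := by simp [mul_assoc]

theorem sum_measureReal_lt_maxCoord_le (hγ : IsMultiStoppingTime ℱ γ)
    (hγ_int : Integrable (fun ω => ∑ l, (γ ω l : ℝ)) P) (K : ℕ) :
    ∑ i ∈ Finset.range K, P.real {ω | i < maxCoord γ ω} ≤ ∫ ω, ∑ l, (γ ω l : ℝ) ∂P := by
  have hmeas i := ℱ.le _ _ (hγ.measurableSet_lt_maxCoord i)
  have hind (i : ℕ) : Integrable ({ω | i < maxCoord γ ω}.indicator (1 : Ω → ℝ)) P :=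
    (integrable_const 1).indicator (hmeas i)
  calc ∑ i ∈ Finset.range K, P.real {ω | i < maxCoord γ ω}
      = ∫ ω, ∑ i ∈ Finset.range K, {ω | i < maxCoord γ ω}.indicator 1 ω ∂P := by
        rw [integral_finsetSum _ fun i _ => hind i]
        exact Finset.sum_congr rfl fun i _ => (integral_indicator_one (hmeas i)).symm
    _ ≤ ∫ ω, ∑ l, (γ ω l : ℝ) ∂P :=
        integral_mono (integrable_finsetSum _ fun i _ => hind i) hγ_int fun ω => ?_
  have hsub : (Finset.range K).filter (· < maxCoord γ ω) ⊆ Finset.range (maxCoord γ ω) :=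
    fun i hi => Finset.mem_range.2 (Finset.mem_filter.1 hi).2
  calc ∑ i ∈ Finset.range K, {ω | i < maxCoord γ ω}.indicator 1 ω
      = (((Finset.range K).filter (· < maxCoord γ ω)).card : ℝ) := by
        simp [indicator_apply, Finset.sum_boole]
    _ ≤ (maxCoord γ ω : ℝ) := by
        exact_mod_cast (Finset.card_le_card hsub).trans_eq (Finset.card_range _)
    _ ≤ ∑ l, (γ ω l : ℝ) := maxCoord_le_sum

end Increments

section Variation

def diagVariation (M : (Fin d → ℕ) → Ω → ℝ) (γ : Ω → Fin d → ℕ) (ω : Ω) : ℝ :=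
  ∑ i ∈ Finset.range (maxCoord γ ω), |M (fun _ => i + 1) ω - M (fun _ => i) ω|

variable {P : Measure Ω} [IsFiniteMeasure P] {M : (Fin d → ℕ) → Ω → ℝ} {c : ℝ} {ω : Ω}

theorem diagVariation_nonneg : 0 ≤ diagVariation M γ ω :=
  Finset.sum_nonneg fun _ _ => abs_nonneg _

theorem abs_diag_le_add_diagVariation {j : ℕ} (hj : j ≤ maxCoord γ ω) :
    |M (fun _ => j) ω| ≤ |M (fun _ => 0) ω| + diagVariation M γ ω := by
  have htel := Finset.sum_range_sub (fun i => M (fun _ => i) ω) j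
  have h : |M (fun _ => j) ω - M (fun _ => 0) ω| ≤ diagVariation M γ ω := by
    rw [← htel]
    exact (Finset.abs_sum_le_sum_abs _ _).trans (Finset.sum_le_sum_of_subset_of_nonneg
      (Finset.range_subset_range.2 hj) fun _ _ _ => abs_nonneg _)
  linarith [abs_sub_abs_le_abs_sub (M (fun _ => j) ω) (M (fun _ => 0) ω)]

theorem integrable_diagVariation (hM : Martingale M ℱ P)
    (hc : HasBoundedIncrements P ℱ M c)
    (hγ : IsMultiStoppingTime ℱ γ) (hγ_int : Integrable (fun ω => ∑ l, (γ ω l : ℝ)) P) :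
    Integrable (diagVariation M γ) P := by
  set Δ : ℕ → Ω → ℝ := fun i ω => |M (fun _ => i + 1) ω - M (fun _ => i) ω|
  set V : ℕ → Ω → ℝ := fun K ω =>
    ∑ i ∈ Finset.range K, {ω | i < maxCoord γ ω}.indicator (Δ i) ω
  have hmeas i := ℱ.le _ _ (hγ.measurableSet_lt_maxCoord i)
  have hΔ (i : ℕ) : Integrable (Δ i) P := ((hM.integrable _).sub (hM.integrable _)).abs
  have hV (K : ℕ) : Integrable (V K) P :=
    integrable_finsetSum _ fun i _ => (hΔ i).indicator (hmeas i)
  refine integrable_of_tendsto_of_integral_abs_le hV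
    (C := d * |c| * ∫ ω, ∑ l, (γ ω l : ℝ) ∂P) (fun K => ?_) (ae_of_all _ fun ω => ?_)
  · have hV_nonneg ω : 0 ≤ V K ω :=
      Finset.sum_nonneg fun i _ => indicator_nonneg (fun _ _ => abs_nonneg _) _
    calc ∫ ω, |V K ω| ∂P = ∫ ω, V K ω ∂P := by simp_rw [abs_of_nonneg (hV_nonneg _)]
      _ = ∑ i ∈ Finset.range K, ∫ ω in {ω | i < maxCoord γ ω}, Δ i ω ∂P := by
        rw [integral_finsetSum _ fun i _ => (hΔ i).indicator (hmeas i)]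
        exact Finset.sum_congr rfl fun i _ => integral_indicator (hmeas i)
      _ ≤ ∑ i ∈ Finset.range K, d * |c| * P.real {ω | i < maxCoord γ ω} :=
        Finset.sum_le_sum fun i _ =>
          (setIntegral_abs_diag_increment_le hM hc i (hγ.measurableSet_lt_maxCoord i)).trans
            (by gcongr; exact le_abs_self c)
      _ ≤ d * |c| * ∫ ω, ∑ l, (γ ω l : ℝ) ∂P := by
        rw [← Finset.mul_sum]
        gcongr
        exact sum_measureReal_lt_maxCoord_le hγ hγ_int K
  · refine tendsto_const_nhds.congr' ?_
    filter_upwards [eventually_ge_atTop (maxCoord γ ω)] with K hK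
    simp only [V, diagVariation, indicator_apply, mem_ofPred_eq]
    rw [← Finset.sum_filter]
    congr 1
    ext i
    simp only [Finset.mem_filter, Finset.mem_range]
    omega

end Variation

section OptionalSampling

variable {P : Measure Ω} [IsFiniteMeasure P] {M : (Fin d → ℕ) → Ω → ℝ} {c : ℝ}

theorem integral_abs_stoppedValue_truncate_le (hM : Martingale M ℱ P)
    (hc : HasBoundedIncrements P ℱ M c)
    (hγ : IsMultiStoppingTime ℱ γ) (hγ_int : Integrable (fun ω => ∑ l, (γ ω l : ℝ)) P) (k : ℕ) :
    ∫ ω, |M (truncate γ k ω) ω| ∂P ≤ ∫ ω, (|M (fun _ => 0) ω| + diagVariation M γ ω) ∂P := by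
  have hζ := hγ.diagHull.truncate k
  calc ∫ ω, |M (truncate γ k ω) ω| ∂P
      ≤ ∫ ω, |M (truncate (diagHull γ) k ω) ω| ∂P :=
        integral_abs_stoppedValue_le_of_le hM (hγ.truncate k) hζ
          (fun _ => truncate_mono le_diagHull) fun _ => truncate_le
    _ ≤ ∫ ω, (|M (fun _ => 0) ω| + diagVariation M γ ω) ∂P := by
        refine integral_mono (integrable_stoppedValue_of_le hM hζ fun _ => truncate_le).abs
          ((hM.integrable _).abs.add (integrable_diagVariation hM hc hγ hγ_int)) fun ω => ?_
        simp only [truncate_diagHull]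
        exact abs_diag_le_add_diagVariation (min_le_left _ _)

theorem integrable_stoppedValue (hM : Martingale M ℱ P)
    (hc : HasBoundedIncrements P ℱ M c)
    (hγ : IsMultiStoppingTime ℱ γ) (hγ_int : Integrable (fun ω => ∑ l, (γ ω l : ℝ)) P) :
    Integrable (fun ω => M (γ ω) ω) P :=
  integrable_of_tendsto_of_integral_abs_le
    (fun k => integrable_stoppedValue_of_le hM (hγ.truncate k) fun _ => truncate_le)
    (integral_abs_stoppedValue_truncate_le hM hc hγ hγ_int)
    (ae_of_all _ fun ω => tendsto_const_nhds.congr'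
      ((eventually_truncate_eq γ ω).mono fun _ hk => congrArg (M · ω) hk.symm))

theorem tendsto_integral_abs_stoppedValue_truncate_sub (hM : Martingale M ℱ P)
    (hc : HasBoundedIncrements P ℱ M c)
    (hγ : IsMultiStoppingTime ℱ γ) (hγ_int : Integrable (fun ω => ∑ l, (γ ω l : ℝ)) P) :
    Tendsto (fun k => ∫ ω, |M (truncate γ k ω) ω - M (γ ω) ω| ∂P) atTop (𝓝 0) := by
  have hMγ := integrable_stoppedValue hM hc hγ hγ_int
  have h := tendsto_integral_of_dominated_convergence
    (F := fun k ω => |M (truncate γ k ω) ω - M (γ ω) ω|) (f := fun _ => 0)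
    (fun ω => |M (fun _ => 0) ω| + diagVariation M γ ω + |M (γ ω) ω|)
    (fun k => ((integrable_stoppedValue_of_le hM (hγ.truncate k) fun _ => truncate_le).sub
      hMγ).abs.aestronglyMeasurable)
    (((hM.integrable _).abs.add (integrable_diagVariation hM hc hγ hγ_int)).add hMγ.abs)
    (fun k => ae_of_all _ fun ω => ?_) (ae_of_all _ fun ω => ?_)
  · simpa using h
  · rw [Real.norm_eq_abs, abs_abs]
    by_cases h : γ ω ≤ fun _ => k
    · rw [truncate_of_le h, sub_self, abs_zero]
      exact add_nonneg (add_nonneg (abs_nonneg _) diagVariation_nonneg) (abs_nonneg _)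
    · rw [truncate_of_not_le h]
      have hk : k ≤ maxCoord γ ω := (not_le.1 (mt maxCoord_le_iff.1 h)).le
      linarith [abs_sub (M (fun _ => k) ω) (M (γ ω) ω),
        abs_diag_le_add_diagVariation (M := M) hk]
  · exact tendsto_const_nhds.congr' ((eventually_truncate_eq γ ω).mono fun k hk => by simp [hk])

theorem setIntegral_stoppedValue_eq_of_le (hM : Martingale M ℱ P)
    (hc : HasBoundedIncrements P ℱ M c)
    (hσ : IsMultiStoppingTime ℱ σ) (hτ : IsMultiStoppingTime ℱ τ)
    (hσ_int : Integrable (fun ω => ∑ l, (σ ω l : ℝ)) P)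
    (hτ_int : Integrable (fun ω => ∑ l, (τ ω l : ℝ)) P) (hστ : ∀ ω, σ ω ≤ τ ω) {A : Set Ω}
    (hA : MeasurableSet[stoppedSigma ℱ σ hσ] A) :
    ∫ ω in A, M (σ ω) ω ∂P = ∫ ω in A, M (τ ω) ω ∂P := by
  set A' : ℕ → Set Ω := fun k => A ∩ {ω | σ ω ≤ fun _ => k}
  have hA'_meas (k : ℕ) : MeasurableSet (A' k) :=
    (hσ.stoppedSigma_le _ hA).inter (ℱ.le _ _ (hσ _))
  have hA'_mono : Monotone A' := fun j k hjk =>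
    inter_subset_inter_right _ fun ω (h : σ ω ≤ _) => h.trans fun _ => hjk
  have hA'_union : ⋃ k, A' k = A :=
    (iUnion_subset fun k => inter_subset_left).antisymm fun ω hω =>
      mem_iUnion.2 ⟨maxCoord σ ω, hω, maxCoord_le_iff.1 le_rfl⟩
  have hlim {X : Ω → ℝ} (hX : Integrable X P) :
      Tendsto (fun k => ∫ ω in A' k, X ω ∂P) atTop (𝓝 (∫ ω in A, X ω ∂P)) := by
    have := tendsto_setIntegral_of_monotone hA'_meas hA'_mono hX.integrableOn
    rwa [hA'_union] at this
  have hτk (k : ℕ) := integrable_stoppedValue_of_le hM (hτ.truncate k) fun _ => truncate_le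
  have hMτ := integrable_stoppedValue hM hc hτ hτ_int
  have heq (k : ℕ) : ∫ ω in A' k, M (σ ω) ω ∂P = ∫ ω in A' k, M (truncate τ k ω) ω ∂P := by
    have hk := measurableSet_inter_le_truncate hσ hA k
    calc ∫ ω in A' k, M (σ ω) ω ∂P = ∫ ω in A' k, M (truncate σ k ω) ω ∂P :=
          setIntegral_congr_fun (hA'_meas k) fun ω hω => by rw [truncate_of_le hω.2]
      _ = ∫ ω in A' k, M (fun _ => k) ω ∂P :=
          setIntegral_stoppedValue_of_le hM (hσ.truncate k) (fun _ => truncate_le) hk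
      _ = ∫ ω in A' k, M (truncate τ k ω) ω ∂P :=
          (setIntegral_stoppedValue_of_le hM (hτ.truncate k) (fun _ => truncate_le)
            (stoppedSigma_mono _ _ (fun _ => truncate_mono (hστ _)) _ hk)).symm
  have hdiff : Tendsto (fun k => ∫ ω in A' k, M (truncate τ k ω) ω ∂P -
      ∫ ω in A' k, M (τ ω) ω ∂P) atTop (𝓝 0) := by
    refine squeeze_zero_norm (fun k => ?_)
      (tendsto_integral_abs_stoppedValue_truncate_sub hM hc hτ hτ_int)
    rw [← integral_sub (hτk k).integrableOn hMτ.integrableOn]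
    refine (norm_integral_le_integral_norm _).trans ?_
    simp only [Real.norm_eq_abs]
    exact setIntegral_le_integral (f := fun ω => |M (truncate τ k ω) ω - M (τ ω) ω|)
      ((hτk k).sub hMτ).abs (ae_of_all _ fun _ => abs_nonneg _)
  exact tendsto_nhds_unique ((hlim (integrable_stoppedValue hM hc hσ hσ_int)).congr heq)
    (by simpa using hdiff.add (hlim hMτ))

theorem condExp_stoppedValue_ae_eq (hM : Martingale M ℱ P)
    (hc : HasBoundedIncrements P ℱ M c)
    (hσ : IsMultiStoppingTime ℱ σ) (hτ : IsMultiStoppingTime ℱ τ)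
    (hσ_int : Integrable (fun ω => ∑ l, (σ ω l : ℝ)) P)
    (hτ_int : Integrable (fun ω => ∑ l, (τ ω l : ℝ)) P) (hστ : ∀ ω, σ ω ≤ τ ω) :
    P[fun ω => M (τ ω) ω | stoppedSigma ℱ σ hσ] =ᵐ[P] fun ω => M (σ ω) ω :=
  (ae_eq_condExp_of_forall_setIntegral_eq hσ.stoppedSigma_le
    (integrable_stoppedValue hM hc hτ hτ_int)
    (fun _ _ _ => (integrable_stoppedValue hM hc hσ hσ_int).integrableOn)
    (fun _ hA _ => setIntegral_stoppedValue_eq_of_le hM hc hσ hτ hσ_int hτ_int hστ hA)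
    (measurable_stoppedValue hM.stronglyAdapted.adapted hσ).aestronglyMeasurable).symm

end OptionalSampling

theorem stmt6_general [inst : MeasurableSpace Ω] (P : Measure Ω) [IsProbabilityMeasure P]
    (F : (Fin d → ℕ) → MeasurableSpace Ω)
    (hF_le : ∀ n, F n ≤ inst)
    (hF_mono : ∀ ⦃m n : Fin d → ℕ⦄, m ≤ n → F m ≤ F n)
    (M : (Fin d → ℕ) → Ω → ℝ)
    (hM_meas : ∀ n, Measurable[F n] (M n))
    (hM_mart : ∀ m n : Fin d → ℕ, m ≤ n → P[M n | F m] =ᵐ[P] M m)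
    (c : ℝ)
    (hc : ∀ (n : Fin d → ℕ) (l : Fin d),
      ∀ᵐ ω ∂P,
        (P[fun ω' => |M (Function.update n l (n l + 1)) ω' - M n ω'| | F n]) ω ≤ c)
    (ρ : ℝ≥0 → Ω → Fin d → ℕ)
    (hρ_stop : ∀ t : ℝ≥0, ∀ n, MeasurableSet[F n] {ω | ρ t ω ≤ n})
    (hρ_mono : ∀ ω, ∀ ⦃s t : ℝ≥0⦄, s ≤ t → ρ s ω ≤ ρ t ω)
    (hρ_int : ∀ t : ℝ≥0, Integrable (fun ω => ∑ l : Fin d, (ρ t ω l : ℝ)) P) :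
    (∀ t : ℝ≥0,
      Integrable (fun ω => M (ρ t ω) ω) P ∧
      Measurable[stoppedSigma F (ρ t) (hρ_stop t)] (fun ω => M (ρ t ω) ω)) ∧
    (∀ s t : ℝ≥0, s ≤ t →
      P[fun ω => M (ρ t ω) ω | stoppedSigma F (ρ s) (hρ_stop s)] =ᵐ[P]
        fun ω => M (ρ s ω) ω) := by
  let ℱ : Filtration (Fin d → ℕ) inst := ⟨F, hF_mono, hF_le⟩
  have hM : Martingale M ℱ P := ⟨Adapted.stronglyAdapted hM_meas, hM_mart⟩
  exact ⟨fun t => ⟨integrable_stoppedValue hM hc (hρ_stop t) (hρ_int t),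
      measurable_stoppedValue (ℱ := ℱ) hM_meas (hρ_stop t)⟩,
    fun s t hst => condExp_stoppedValue_ae_eq hM hc (hρ_stop s) (hρ_stop t) (hρ_int s) (hρ_int t)
      fun ω => hρ_mono ω hst⟩

/-- multiparameter optional sampling: if `M` is an `F`-martingale indexed by
`ℕ^d` with uniformly bounded conditional increments, and `(ρ(t))_{t ≥ 0}` is a nondecreasing
family of `ℕ^d`-valued `F`-stopping times with `E[∑_l ρ_l(t)] < ∞`, then
`N(t) := M(ρ(t))` is a martingale for the filtration `G(t) := F(ρ(t))`. -/
theorem stmt6 [inst : MeasurableSpace Ω] (P : Measure Ω) [IsProbabilityMeasure P]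
    (F : (Fin d → ℕ) → MeasurableSpace Ω)
    (hF_le : ∀ n, F n ≤ inst)
    (hF_mono : ∀ ⦃m n : Fin d → ℕ⦄, m ≤ n → F m ≤ F n)
    (M : (Fin d → ℕ) → Ω → ℝ)
    (hM_int : ∀ n, Integrable (M n) P)
    (hM_meas : ∀ n, Measurable[F n] (M n))
    (hM_mart : ∀ m n : Fin d → ℕ, m ≤ n → P[M n | F m] =ᵐ[P] M m)
    (c : ℝ)
    (hc : ∀ (n : Fin d → ℕ) (l : Fin d),
      ∀ᵐ ω ∂P,
        (P[fun ω' => |M (Function.update n l (n l + 1)) ω' - M n ω'| | F n]) ω ≤ c)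
    (ρ : ℝ≥0 → Ω → Fin d → ℕ)
    (hρ_stop : ∀ t : ℝ≥0, ∀ n, MeasurableSet[F n] {ω | ρ t ω ≤ n})
    (hρ_mono : ∀ ω, ∀ ⦃s t : ℝ≥0⦄, s ≤ t → ρ s ω ≤ ρ t ω)
    (hρ_int : ∀ t : ℝ≥0, Integrable (fun ω => ∑ l : Fin d, (ρ t ω l : ℝ)) P) :
    (∀ t : ℝ≥0,
      Integrable (fun ω => M (ρ t ω) ω) P ∧
      Measurable[stoppedSigma F (ρ t) (hρ_stop t)] (fun ω => M (ρ t ω) ω)) ∧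
    (∀ s t : ℝ≥0, s ≤ t →
      P[fun ω => M (ρ t ω) ω | stoppedSigma F (ρ s) (hρ_stop s)] =ᵐ[P]
        fun ω => M (ρ s ω) ω) :=
  stmt6_general (inst := inst) P F hF_le hF_mono M hM_meas hM_mart c hc ρ hρ_stop hρ_mono hρ_int

end Stmt6
end
end

section
/- Let a : [0,∞) → [0,∞) be nondecreasing and right-continuous with a(0) = 0, and let c(t) := inf{s ≥ 0 : a(s) > t} be its right inverse; assume c(t) < ∞ for all t ≥ 0. Let μ_a denote the Lebesgue–Stieltjes measure associated with a (so μ_a([0,t]) = a(t) for t ≥ 0, extending a by 0 on (−∞,0)). Then for every Borel measurable function f : [0,∞) → [0,∞], ∫_{[0,∞)} f(s) dμ_a(s) = ∫_{[0,∞)} f(c(s)) ds, where the right-hand side is the Lebesgue integral. -/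
/-!
The right inverse `c` of `a` satisfies the Galois-type sandwich
`[0, a x) ⊆ {s ≥ 0 | c s ≤ x} ⊆ [0, a x]` (the upper inclusion by right continuity of `a`), so
the push-forward of Lebesgue measure on `[0, ∞)` under `c` gives every half-line `(-∞, x]` the
mass `a x`, exactly as `μ_a` does. Hence the two measures coincide, and the identity is the
change of variables formula for a push-forward measure.
-/

open MeasureTheory Set Filter
open scoped ENNReal Topology

theorem MeasureTheory.Measure.ext_of_Iic_of_ne_top {α : Type*} [TopologicalSpace α]
    [MeasurableSpace α] [SecondCountableTopology α] [LinearOrder α] [OrderTopology α]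
    [BorelSpace α] [NoMinOrder α] {μ ν : Measure α} (hμ : ∀ x, μ (Iic x) ≠ ∞)
    (h : ∀ x, μ (Iic x) = ν (Iic x)) : μ = ν := by
  have hν : ∀ x, ν (Iic x) ≠ ∞ := fun x => h x ▸ hμ x
  refine Measure.ext_of_Ioc' μ ν (fun x y _ => ?_) (fun x y hxy => ?_)
  · exact ne_top_of_le_ne_top (hμ y) (measure_mono Ioc_subset_Iic_self)
  · rw [← Iic_sdiff_Iic, measure_sdiff (Iic_subset_Iic.2 hxy.le) nullMeasurableSet_Iic (hμ x),
      measure_sdiff (Iic_subset_Iic.2 hxy.le) nullMeasurableSet_Iic (hν x), h, h]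

namespace StieltjesFunction

variable (a : StieltjesFunction ℝ)

-- Where the set is empty, `sInf` returns the junk value `0`.
noncomputable def rightInv (t : ℝ) : ℝ := sInf {s : ℝ | 0 ≤ s ∧ t < a s}

variable {a}

theorem rightInv_nonneg (t : ℝ) : 0 ≤ a.rightInv t :=
  Real.sInf_nonneg fun _ hs => hs.1

theorem rightInv_le {t x : ℝ} (hx : 0 ≤ x) (h : t < a x) : a.rightInv t ≤ x :=
  csInf_le ⟨0, fun _ hs => hs.1⟩ ⟨hx, h⟩

theorem monotone_rightInv (hne : ∀ t, ∃ s, 0 ≤ s ∧ t < a s) : Monotone a.rightInv :=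
  fun _ t₂ h => csInf_le_csInf ⟨0, fun _ hs => hs.1⟩ (hne t₂) fun _ hs => ⟨hs.1, h.trans_lt hs.2⟩

theorem le_of_rightInv_le (hne : ∀ t, ∃ s, 0 ≤ s ∧ t < a s) {t x : ℝ} (h : a.rightInv t ≤ x) :
    t ≤ a x := by
  have hlt : ∀ u, x < u → t < a u := fun u hu => by
    obtain ⟨v, hv, hvu⟩ := exists_lt_of_csInf_lt (hne t) (h.trans_lt hu)
    exact hv.2.trans_le (a.mono hvu.le)
  exact ge_of_tendsto ((a.right_continuous x).mono_left (nhdsWithin_mono x Ioi_subset_Ici_self))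
    (eventually_nhdsWithin_of_forall fun u hu => (hlt u hu).le)

theorem volume_Ici_preimage_rightInv_Iic (hne : ∀ t, ∃ s, 0 ≤ s ∧ t < a s)
    (ha0 : ∀ x ≤ 0, a x = 0) (x : ℝ) :
    volume.restrict (Ici 0) (a.rightInv ⁻¹' Iic x) = ENNReal.ofReal (a x) := by
  rw [Measure.restrict_apply ((monotone_rightInv hne).measurable measurableSet_Iic)]
  have hupper : a.rightInv ⁻¹' Iic x ∩ Ici 0 ⊆ Icc 0 (a x) := fun s hs =>
    ⟨hs.2, le_of_rightInv_le hne hs.1⟩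
  rcases lt_or_ge x 0 with hx | hx
  · have hempty : a.rightInv ⁻¹' Iic x ∩ Ici 0 = ∅ :=
      eq_empty_of_forall_notMem fun s hs => hx.not_ge ((rightInv_nonneg s).trans hs.1)
    rw [hempty, measure_empty, ha0 x hx.le, ENNReal.ofReal_zero]
  · have hlower : Ico 0 (a x) ⊆ a.rightInv ⁻¹' Iic x ∩ Ici 0 := fun s hs =>
      ⟨rightInv_le hx hs.2, hs.1⟩
    refine le_antisymm ?_ ?_
    · simpa using measure_mono (μ := volume) hupper
    · simpa using measure_mono (μ := volume) hlower

theorem map_rightInv_volume_Ici (hne : ∀ t, ∃ s, 0 ≤ s ∧ t < a s) (ha0 : ∀ x ≤ 0, a x = 0) :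
    (volume.restrict (Ici 0)).map a.rightInv = a.measure := by
  have hmeas := (monotone_rightInv hne).measurable
  have hbot : Tendsto a atBot (𝓝 0) :=
    tendsto_const_nhds.congr' ((eventually_le_atBot 0).mono fun x hx => (ha0 x hx).symm)
  refine Measure.ext_of_Iic_of_ne_top (fun x => ?_) (fun x => ?_)
  · rw [Measure.map_apply hmeas measurableSet_Iic, volume_Ici_preimage_rightInv_Iic hne ha0]
    exact ENNReal.ofReal_ne_top
  · rw [Measure.map_apply hmeas measurableSet_Iic, volume_Ici_preimage_rightInv_Iic hne ha0,
      a.measure_Iic hbot, sub_zero]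

end StieltjesFunction

namespace Stmt7

/-- Lemma 3.10, equation (3.49): if `a` is a nondecreasing right-continuous
function with `a = 0` on `(-∞, 0]` (in particular `a 0 = 0`), whose right inverse
`c(t) = inf {s ≥ 0 : a(s) > t}` is finite for every `t ≥ 0`, then for every nonnegative Borel
function `f`, `∫_{[0,∞)} f dμ_a = ∫_{[0,∞)} f(c(s)) ds`, where `μ_a` is the Lebesgue–Stieltjes
measure of `a` and the right-hand side is a Lebesgue integral. -/
theorem stmt7 (a : StieltjesFunction ℝ)
    (ha0 : ∀ x : ℝ, x ≤ 0 → a x = 0)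
    (hfin : ∀ t : ℝ, 0 ≤ t → ∃ s : ℝ, 0 ≤ s ∧ t < a s)
    (c : ℝ → ℝ) (hc : ∀ t, c t = sInf {s : ℝ | 0 ≤ s ∧ t < a s})
    (f : ℝ → ℝ≥0∞) (hf : Measurable f) :
    ∫⁻ s in Set.Ici (0 : ℝ), f s ∂a.measure
      = ∫⁻ s in Set.Ici (0 : ℝ), f (c s) ∂(volume : Measure ℝ) := by
  obtain rfl : c = a.rightInv := funext hc
  have hne : ∀ t, ∃ s, 0 ≤ s ∧ t < a s := fun t =>
    (lt_or_ge t 0).elim (fun ht => ⟨0, le_rfl, by rwa [ha0 0 le_rfl]⟩) (hfin t)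
  have hc0 : a.rightInv ⁻¹' Ici 0 = univ := eq_univ_of_forall StieltjesFunction.rightInv_nonneg
  rw [← StieltjesFunction.map_rightInv_volume_Ici hne ha0,
    setLIntegral_map measurableSet_Ici hf (StieltjesFunction.monotone_rightInv hne).measurable,
    hc0, Measure.restrict_univ]

end Stmt7
end

section
/- Let S be a countable index set and for each r ∈ S let (u^r_k)_{k≥1} be an i.i.d. sequence of strictly positive random variables. Assume inf_{r∈S} E[u^r_1] > 0 and that the family {(u^r_1)²}_{r∈S} is uniformly integrable. Let N^r(t) = max{m ∈ ℕ₀ : ∑_{k=1}^m u^r_k ≤ t} be the associated counting processes. Then for every t ≥ 0 and every p ∈ ℕ, sup_{r∈S} E[(N^r(t))^p] < ∞. -/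
/-! Chernoff: for `s = a / M`, with `M` a uniform bound on `E[(u^r_1)²]` provided by uniform
integrability, `exp (-s x) ≤ 1 - s x + s² x² / 2` gives `E[exp (-s u^r_1)] ≤ 1 - a² / (2M) < 1`
for every `r`. Hence, with `q = max (1 - a² / (2M)) 0`,
`P(N^r(t) ≥ n) = P(ξ^r(n) ≤ t) ≤ exp (s t) q^n`, and
`E[(N^r(t))^p] ≤ ∑ n^p exp (s t) q^n < ∞` uniformly in `r`. -/

open MeasureTheory ProbabilityTheory Set
open scoped ENNReal

noncomputable section

namespace Stmt13

variable {Ω : Type*} [MeasurableSpace Ω]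

/-- Partial sums `ξ(m) = ∑_{k=1}^m u_k` (0-indexed sequence). -/
def psum (u : ℕ → Ω → ℝ) (m : ℕ) (ω : Ω) : ℝ := ∑ k ∈ Finset.range m, u k ω

/-- Counting (renewal) process `N(t) = max {m ∈ ℕ₀ : ξ(m) ≤ t}`. -/
def count (u : ℕ → Ω → ℝ) (t : ℝ) (ω : Ω) : ℕ := sSup {m : ℕ | psum u m ω ≤ t}

lemma _root_.Real.exp_neg_le_one_sub_add_sq_div_two {x : ℝ} (hx : 0 ≤ x) :
    Real.exp (-x) ≤ 1 - x + x ^ 2 / 2 := by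
  have hcubic : 1 + x + x ^ 2 / 2 + x ^ 3 / 6 ≤ Real.exp x := by
    have h := Real.sum_le_exp_of_nonneg hx 4
    norm_num [Finset.sum_range_succ, Nat.factorial] at h
    linarith
  have hpos : 0 < 1 - x + x ^ 2 / 2 := by nlinarith [sq_nonneg (x - 1)]
  rw [Real.exp_neg, inv_le_iff_one_le_mul₀ (Real.exp_pos x)]
  nlinarith [mul_le_mul_of_nonneg_right hcubic hpos.le, pow_nonneg hx 3, pow_nonneg hx 4,
    pow_nonneg hx 5]

omit [MeasurableSpace Ω] in
lemma psum_count_le {u : ℕ → Ω → ℝ} {t : ℝ} (ht : 0 ≤ t) (ω : Ω) :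
    psum u (count u t ω) ω ≤ t := by
  have hzero : (0 : ℕ) ∈ {m : ℕ | psum u m ω ≤ t} := by simpa [psum] using ht
  by_cases hbdd : BddAbove {m : ℕ | psum u m ω ≤ t}
  · exact Nat.sSup_mem ⟨0, hzero⟩ hbdd
  -- an unbounded set has `sSup = 0`, and `ξ(0) = 0 ≤ t`
  · rwa [count, csSup_of_not_bddAbove hbdd, csSup_empty]

lemma measurable_psum {u : ℕ → Ω → ℝ} (hu : ∀ k, Measurable (u k)) (m : ℕ) :
    Measurable (psum u m) :=
  Finset.measurable_sum _ fun k _ => hu k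

lemma lintegral_count_pow_le_tsum (μ : Measure Ω) {u : ℕ → Ω → ℝ} (hu : ∀ k, Measurable (u k))
    {t : ℝ} (ht : 0 ≤ t) (p : ℕ) :
    ∫⁻ ω, (count u t ω : ℝ≥0∞) ^ p ∂μ ≤ ∑' n : ℕ, (n : ℝ≥0∞) ^ p * μ {ω | psum u n ω ≤ t} := by
  have hmeas : ∀ n, MeasurableSet {ω | psum u n ω ≤ t} := fun n =>
    measurableSet_le (measurable_psum hu n) measurable_const
  have hpointwise : ∀ ω, (count u t ω : ℝ≥0∞) ^ p ≤
      ∑' n : ℕ, {ω | psum u n ω ≤ t}.indicator (fun _ => (n : ℝ≥0∞) ^ p) ω := fun ω => by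
    refine le_of_eq_of_le ?_ (ENNReal.le_tsum (count u t ω))
    exact (indicator_of_mem (s := {ω | psum u (count u t ω) ω ≤ t}) (psum_count_le ht ω)
      fun _ => (count u t ω : ℝ≥0∞) ^ p).symm
  calc ∫⁻ ω, (count u t ω : ℝ≥0∞) ^ p ∂μ
      ≤ ∫⁻ ω, ∑' n : ℕ, {ω | psum u n ω ≤ t}.indicator (fun _ => (n : ℝ≥0∞) ^ p) ω ∂μ :=
        lintegral_mono hpointwise
    _ = ∑' n : ℕ, (n : ℝ≥0∞) ^ p * μ {ω | psum u n ω ≤ t} := by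
        rw [lintegral_tsum fun n => (measurable_const.indicator (hmeas n)).aemeasurable]
        simp_rw [lintegral_indicator_const (hmeas _)]

section Chernoff

variable {μ : Measure Ω} [IsProbabilityMeasure μ]

lemma integrable_exp_neg_mul_of_nonneg {X : Ω → ℝ} (hX : AEMeasurable X μ) (hnonneg : 0 ≤ᵐ[μ] X)
    {s : ℝ} (hs : 0 ≤ s) : Integrable (fun ω => Real.exp (-s * X ω)) μ := by
  refine (integrable_const (1 : ℝ)).mono' (hX.const_mul (-s)).exp.aestronglyMeasurable ?_
  filter_upwards [hnonneg] with ω hω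
  rw [Real.norm_eq_abs, abs_of_pos (Real.exp_pos _), Real.exp_le_one_iff, neg_mul,
    neg_nonpos]
  exact mul_nonneg hs hω

lemma mgf_neg_le_one_sub_add {X : Ω → ℝ} (hX : AEMeasurable X μ) (hnonneg : 0 ≤ᵐ[μ] X)
    (hX2 : Integrable (fun ω => X ω ^ 2) μ) {s : ℝ} (hs : 0 ≤ s) :
    mgf X μ (-s) ≤ 1 - s * ∫ ω, X ω ∂μ + s ^ 2 / 2 * ∫ ω, X ω ^ 2 ∂μ := by
  have hXint : Integrable X μ :=
    ((memLp_two_iff_integrable_sq hX.aestronglyMeasurable).2 hX2).integrable one_le_two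
  have hlin : Integrable (fun ω => 1 - s * X ω) μ := (integrable_const 1).sub (hXint.const_mul s)
  calc mgf X μ (-s) ≤ ∫ ω, (1 - s * X ω + s ^ 2 / 2 * X ω ^ 2) ∂μ := by
        refine integral_mono_ae (integrable_exp_neg_mul_of_nonneg hX hnonneg hs)
          (hlin.add (hX2.const_mul _)) ?_
        filter_upwards [hnonneg] with ω hω
        have h := Real.exp_neg_le_one_sub_add_sq_div_two (mul_nonneg hs hω)
        rw [neg_mul]
        linarith
    _ = 1 - s * ∫ ω, X ω ∂μ + s ^ 2 / 2 * ∫ ω, X ω ^ 2 ∂μ := by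
        rw [integral_add hlin (hX2.const_mul _),
          integral_sub (integrable_const 1) (hXint.const_mul s), integral_const_mul,
          integral_const_mul]
        simp

lemma mgf_neg_div_le_one_sub_sq_div {X : Ω → ℝ} (hX : AEMeasurable X μ) (hnonneg : 0 ≤ᵐ[μ] X)
    (hX2 : Integrable (fun ω => X ω ^ 2) μ) {a M : ℝ} (ha : 0 ≤ a) (hM : 0 < M)
    (hmean : a ≤ ∫ ω, X ω ∂μ) (hsecond : ∫ ω, X ω ^ 2 ∂μ ≤ M) :
    mgf X μ (-(a / M)) ≤ 1 - a ^ 2 / (2 * M) := by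
  have hs : 0 ≤ a / M := by positivity
  refine (mgf_neg_le_one_sub_add hX hnonneg hX2 hs).trans ?_
  have hfirst := mul_le_mul_of_nonneg_left hmean hs
  have hsq := mul_le_mul_of_nonneg_left hsecond (by positivity : 0 ≤ (a / M) ^ 2 / 2)
  have hsa : a / M * a = a ^ 2 / M := by ring
  have hsM : (a / M) ^ 2 / 2 * M = a ^ 2 / (2 * M) := by field_simp
  have hhalf : a ^ 2 / M = 2 * (a ^ 2 / (2 * M)) := by field_simp
  linarith

lemma measure_psum_le_le_ofReal_exp_mul_mgf_pow {u : ℕ → Ω → ℝ} (hu : ∀ k, Measurable (u k))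
    (hnonneg : ∀ k, 0 ≤ᵐ[μ] u k) (hindep : iIndepFun u μ)
    (hident : ∀ k, IdentDistrib (u k) (u 0) μ μ) {s : ℝ} (hs : 0 ≤ s) (t : ℝ) (n : ℕ) :
    μ {ω | psum u n ω ≤ t} ≤ ENNReal.ofReal (Real.exp (s * t) * mgf (u 0) μ (-s) ^ n) := by
  have hsum : psum u n = ∑ k ∈ Finset.range n, u k := by
    ext ω
    simp [psum]
  have hmgf : mgf (psum u n) μ (-s) = mgf (u 0) μ (-s) ^ n := by
    rw [hsum, hindep.mgf_sum hu, Finset.prod_eq_pow_card fun k _ =>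
      mgf_congr_of_identDistrib _ _ (hident k) _, Finset.card_range]
  have hint : Integrable (fun ω => Real.exp (-s * psum u n ω)) μ := by
    rw [hsum]
    exact hindep.integrable_exp_mul_sum hu fun k _ =>
      integrable_exp_neg_mul_of_nonneg (hu k).aemeasurable (hnonneg k) hs
  have hchernoff := measure_le_le_exp_mul_mgf t (neg_nonpos.2 hs) hint
  rw [neg_neg, hmgf] at hchernoff
  rw [← ofReal_measureReal]
  exact ENNReal.ofReal_le_ofReal hchernoff

lemma integral_le_add_max_of_setIntegral_gt_le {f : Ω → ℝ} (hf : Integrable f μ) (hfm : Measurable f) {K ε : ℝ}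
    (htail : ∫ ω in {ω | K < f ω}, f ω ∂μ ≤ ε) :
    ∫ ω, f ω ∂μ ≤ ε + max K 0 := by
  have hmeas : MeasurableSet {ω | K < f ω} := measurableSet_lt measurable_const hfm
  have hbulk : ∫ ω in {ω | K < f ω}ᶜ, f ω ∂μ ≤ max K 0 :=
    calc ∫ ω in {ω | K < f ω}ᶜ, f ω ∂μ ≤ ∫ _ in {ω | K < f ω}ᶜ, max K 0 ∂μ :=
          setIntegral_mono_on hf.integrableOn (integrableOn_const (measure_ne_top _ _))
            hmeas.compl fun ω (hω : ¬K < f ω) => (not_lt.1 hω).trans (le_max_left _ _)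
      _ ≤ ∫ _, max K 0 ∂μ :=
          setIntegral_le_integral (integrable_const _) (ae_of_all _ fun _ => le_max_right _ _)
      _ = max K 0 := by simp
  rw [← integral_add_compl hmeas hf]
  linarith

end Chernoff

lemma tsum_natCast_pow_mul_ofReal_mul_pow_lt_top (p : ℕ) {c q : ℝ} (hc : 0 ≤ c) (hq0 : 0 ≤ q)
    (hq1 : q < 1) : ∑' n : ℕ, (n : ℝ≥0∞) ^ p * ENNReal.ofReal (c * q ^ n) < ⊤ := by
  have hterm : ∀ n : ℕ, (n : ℝ≥0∞) ^ p * ENNReal.ofReal (c * q ^ n) =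
      ENNReal.ofReal (c * ((n : ℝ) ^ p * q ^ n)) := fun n => by
    rw [ENNReal.ofReal_mul hc, ENNReal.ofReal_mul hc, ENNReal.ofReal_mul (by positivity),
      ENNReal.ofReal_pow (Nat.cast_nonneg n), ENNReal.ofReal_natCast]
    ring
  have hsummable : Summable fun n : ℕ => c * ((n : ℝ) ^ p * q ^ n) :=
    (summable_pow_mul_geometric_of_norm_lt_one p (by rwa [Real.norm_of_nonneg hq0])).mul_left c
  simp_rw [hterm]
  rw [← ENNReal.ofReal_tsum_of_nonneg (fun n => by positivity) hsummable]
  exact ENNReal.ofReal_lt_top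

theorem stmt13_general (P : Measure Ω) [IsProbabilityMeasure P]
    {S : Type*}
    (u : S → ℕ → Ω → ℝ)
    (hmeas : ∀ r k, Measurable (u r k))
    (hpos : ∀ r k, ∀ᵐ ω ∂P, 0 < u r k ω)
    (hindep : ∀ r, iIndepFun (u r) P)
    (hident : ∀ r k, IdentDistrib (u r k) (u r 0) P P)
    (a : ℝ) (ha : 0 < a)
    (hmean : ∀ r, a ≤ ∫ ω, u r 0 ω ∂P)
    (hint : ∀ r, Integrable (fun ω => (u r 0 ω) ^ 2) P)
    (hUI : ∀ ε : ℝ, 0 < ε → ∃ K : ℝ,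
      ∀ r, ∫ ω in {ω | K < (u r 0 ω) ^ 2}, (u r 0 ω) ^ 2 ∂P ≤ ε) :
    ∀ t : ℝ, 0 ≤ t → ∀ p : ℕ,
      ∃ C : ℝ≥0∞, C < ⊤ ∧ ∀ r,
        ∫⁻ ω, ((count (u r) t ω : ℝ≥0∞)) ^ p ∂P ≤ C := by
  intro t ht p
  obtain ⟨K, hK⟩ := hUI 1 one_pos
  set M := 1 + max K 0
  have hM : 0 < M := by positivity
  have hsecond : ∀ r, ∫ ω, u r 0 ω ^ 2 ∂P ≤ M := fun r =>
    integral_le_add_max_of_setIntegral_gt_le (hint r) ((hmeas r 0).pow_const 2) (hK r)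
  have hnonneg : ∀ r k, 0 ≤ᵐ[P] u r k := fun r k => (hpos r k).mono fun _ h => h.le
  set s := a / M
  have hs : 0 ≤ s := by positivity
  set q := max (1 - a ^ 2 / (2 * M)) 0
  have hq : q < 1 := max_lt (sub_lt_self 1 (by positivity)) one_pos
  have hmgf : ∀ r, mgf (u r 0) P (-s) ≤ q := fun r =>
    (mgf_neg_div_le_one_sub_sq_div (hmeas r 0).aemeasurable (hnonneg r 0) (hint r) ha.le hM
      (hmean r) (hsecond r)).trans (le_max_left _ _)
  refine ⟨∑' n : ℕ, (n : ℝ≥0∞) ^ p * ENNReal.ofReal (Real.exp (s * t) * q ^ n),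
    tsum_natCast_pow_mul_ofReal_mul_pow_lt_top p (Real.exp_pos _).le (le_max_right _ _) hq,
    fun r => ?_⟩
  refine (lintegral_count_pow_le_tsum P (hmeas r) ht p).trans (ENNReal.tsum_le_tsum fun n => ?_)
  gcongr
  refine (measure_psum_le_le_ofReal_exp_mul_mgf_pow (hmeas r) (hnonneg r) (hindep r) (hident r)
    hs t n).trans (ENNReal.ofReal_le_ofReal ?_)
  gcongr
  · exact mgf_nonneg
  · exact hmgf r

/-- Lemma 4.2: for a countable family of renewal processes whose i.i.d.
strictly positive interarrival times have means bounded away from `0` and uniformly integrable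
squares, all moments of `N^r(t)` are bounded uniformly in `r`. -/
theorem stmt13 (P : Measure Ω) [IsProbabilityMeasure P]
    {S : Type*} [Countable S]
    (u : S → ℕ → Ω → ℝ)
    (hmeas : ∀ r k, Measurable (u r k))
    (hpos : ∀ r k, ∀ᵐ ω ∂P, 0 < u r k ω)
    (hindep : ∀ r, iIndepFun (u r) P)
    (hident : ∀ r k, IdentDistrib (u r k) (u r 0) P P)
    (a : ℝ) (ha : 0 < a)
    (hmean : ∀ r, a ≤ ∫ ω, u r 0 ω ∂P)
    (hint : ∀ r, Integrable (fun ω => (u r 0 ω) ^ 2) P)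
    (hUI : ∀ ε : ℝ, 0 < ε → ∃ K : ℝ,
      ∀ r, ∫ ω in {ω | K < (u r 0 ω) ^ 2}, (u r 0 ω) ^ 2 ∂P ≤ ε) :
    ∀ t : ℝ, 0 ≤ t → ∀ p : ℕ,
      ∃ C : ℝ≥0∞, C < ⊤ ∧ ∀ r,
        ∫⁻ ω, ((count (u r) t ω : ℝ≥0∞)) ^ p ∂P ≤ C :=
  stmt13_general P u hmeas hpos hindep hident a ha hmean hint hUI

end Stmt13
end
end
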